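/- arXiv:1607.00215 — 2 statements merged into one kernel-verified Lean document; each statement's English description precedes it below -/
import Mathlib

section
/- Let a, b > 0 and let X and Y be independent random variables on a probability space with X Gamma-distributed with shape a and rate 1, and Y Gamma-distributed with shape b and rate 1. Then E[X | σ(X+Y)] = (a/(a+b)) · (X+Y) almost surely. -/
/-!
Weighting a `Gamma(a, r)` law by `x` gives `(a / r) • Gamma(a + 1, r)`, and
`Gamma(α, r) ∗ Gamma(β, r) = Gamma(α + β, r)`: the convolution of the densities reduces to the
Beta integral under `y = s t`. Hence for independent `X ~ Gamma(a, 1)`, `Y ~ Gamma(b, 1)` and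
every Borel set `B`, `E[X; X + Y ∈ B] = a · Gamma(a + b + 1, 1)(B)` and symmetrically
`E[Y; X + Y ∈ B] = b · Gamma(a + b + 1, 1)(B)`, so `a / (a + b) · (X + Y)` has the same integral
as `X` over every set of `σ(X + Y)`.
-/

open MeasureTheory ProbabilityTheory Real Set
open scoped ENNReal

lemma lintegral_rpow_mul_one_sub_rpow {α β : ℝ} (hα : 0 < α) (hβ : 0 < β) :
    ∫⁻ t in Ioo 0 1, ENNReal.ofReal (t ^ (α - 1) * (1 - t) ^ (β - 1))
      = ENNReal.ofReal (beta α β) := by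
  have hB := beta_pos hα hβ
  have h := lintegral_betaPDF_eq_one hα hβ
  simp_rw [lintegral_betaPDF, mul_assoc, ENNReal.ofReal_mul (one_div_pos.mpr hB).le] at h
  rw [lintegral_const_mul' _ _ ENNReal.ofReal_ne_top] at h
  rw [← one_mul (ENNReal.ofReal (beta α β)), ← h, mul_comm, ← mul_assoc,
    ← ENNReal.ofReal_mul hB.le, mul_one_div_cancel hB.ne', ENNReal.ofReal_one, one_mul]

lemma lintegral_rpow_mul_sub_rpow {α β s : ℝ} (hα : 0 < α) (hβ : 0 < β) (hs : 0 < s) :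
    ∫⁻ y in Ioo 0 s, ENNReal.ofReal (y ^ (α - 1) * (s - y) ^ (β - 1))
      = ENNReal.ofReal (s ^ (α + β - 1) * beta α β) := by
  have himage : (s * ·) '' Ioo 0 1 = Ioo 0 s := by
    rw [image_mul_left_Ioo hs, mul_zero, mul_one]
  rw [← himage, lintegral_image_eq_lintegral_abs_deriv_mul measurableSet_Ioo (f := (s * ·))
      (fun t _ => (hasDerivAt_const_mul s).hasDerivWithinAt) (mul_right_injective₀ hs.ne').injOn,
    ENNReal.ofReal_mul (by positivity), ← lintegral_rpow_mul_one_sub_rpow hα hβ,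
    ← lintegral_const_mul' _ _ ENNReal.ofReal_ne_top]
  refine setLIntegral_congr_fun measurableSet_Ioo fun t ⟨ht0, ht1⟩ => ?_
  rw [← ENNReal.ofReal_mul (abs_nonneg _), ← ENNReal.ofReal_mul (by positivity)]
  congr 1
  rw [abs_of_pos hs, show s - s * t = s * (1 - t) by ring,
    mul_rpow hs.le ht0.le, mul_rpow hs.le (by linarith),
    show α + β - 1 = 1 + (α - 1) + (β - 1) by ring, rpow_add hs, rpow_add hs, rpow_one]
  ring

lemma measurable_gammaPDF (a r : ℝ) : Measurable (gammaPDF a r) :=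
  (measurable_gammaPDFReal a r).ennreal_ofReal

lemma gammaPDF_mul_gammaPDF_sub {α β r : ℝ} (hα : 0 < α) (hβ : 0 < β) (hr : 0 < r)
    (s y : ℝ) :
    gammaPDF α r y * gammaPDF β r (s - y) = (Icc 0 s).indicator (fun y =>
      ENNReal.ofReal (r ^ α / Gamma α * (r ^ β / Gamma β) * exp (-(r * s)))
        * ENNReal.ofReal (y ^ (α - 1) * (s - y) ^ (β - 1))) y := by
  by_cases hy : y ∈ Icc 0 s
  · have hexp : exp (-(r * y)) * exp (-(r * (s - y))) = exp (-(r * s)) := by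
      rw [← exp_add]; ring_nf
    have := Gamma_pos_of_pos hα
    have := Gamma_pos_of_pos hβ
    have hy0 := hy.1
    rw [indicator_of_mem hy, gammaPDF_of_nonneg hy.1, gammaPDF_of_nonneg (sub_nonneg.mpr hy.2),
      ← ENNReal.ofReal_mul (by positivity), ← ENNReal.ofReal_mul (by positivity), ← hexp]
    ring_nf
  · rw [indicator_of_notMem hy]
    rcases not_and_or.mp hy with hy | hy
    · rw [gammaPDF_of_neg (not_le.mp hy), zero_mul]
    · rw [gammaPDF_of_neg (show s - y < 0 by linarith [not_le.mp hy]), mul_zero]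

-- At `s = 0` the two sides may differ, e.g. when `α + β = 1`.
lemma lconvolution_gammaPDF_of_ne_zero {α β r : ℝ} (hα : 0 < α) (hβ : 0 < β) (hr : 0 < r)
    {s : ℝ} (hs : s ≠ 0) : (gammaPDF α r ⋆ₗ gammaPDF β r) s = gammaPDF (α + β) r s := by
  simp_rw [lconvolution_def, neg_add_eq_sub, gammaPDF_mul_gammaPDF_sub hα hβ hr s]
  rw [lintegral_indicator measurableSet_Icc]
  rcases hs.lt_or_gt with hs | hs
  · rw [Icc_eq_empty (not_le.mpr hs), Measure.restrict_empty, lintegral_zero_measure,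
      gammaPDF_of_neg hs]
  rw [← setLIntegral_congr Ioo_ae_eq_Icc, lintegral_const_mul' _ _ ENNReal.ofReal_ne_top,
    lintegral_rpow_mul_sub_rpow hα hβ hs, ← ENNReal.ofReal_mul (by positivity),
    gammaPDF_of_nonneg hs.le]
  congr 1
  have := Gamma_pos_of_pos hα
  have := Gamma_pos_of_pos hβ
  rw [beta, rpow_add hr]
  field_simp

lemma gammaMeasure_conv_gammaMeasure {α β r : ℝ} (hα : 0 < α) (hβ : 0 < β) (hr : 0 < r) :
    gammaMeasure α r ∗ gammaMeasure β r = gammaMeasure (α + β) r := by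
  rw [gammaMeasure, gammaMeasure, gammaMeasure,
    conv_withDensity_eq_lconvolution (measurable_gammaPDF _ _) (measurable_gammaPDF _ _)]
  refine withDensity_congr_ae ?_
  filter_upwards [Measure.ae_ne volume 0] with s hs
  exact lconvolution_gammaPDF_of_ne_zero hα hβ hr hs

lemma ofReal_mul_gammaPDF {a r : ℝ} (ha : 0 < a) (hr : 0 < r) (x : ℝ) :
    ENNReal.ofReal x * gammaPDF a r x = ENNReal.ofReal (a / r) * gammaPDF (a + 1) r x := by
  rcases lt_or_ge x 0 with hx | hx
  · rw [gammaPDF_of_neg hx, gammaPDF_of_neg hx, mul_zero, mul_zero]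
  have := Gamma_pos_of_pos ha
  rw [gammaPDF_of_nonneg hx, gammaPDF_of_nonneg hx, ← ENNReal.ofReal_mul hx,
    ← ENNReal.ofReal_mul (by positivity), add_sub_cancel_right, Gamma_add_one ha.ne',
    rpow_add_one hr.ne']
  congr 1
  rw [show x ^ a = x ^ (a - 1) * x by rw [← rpow_add_one' hx (by simp [ha.ne']), sub_add_cancel]]
  field_simp

lemma withDensity_ofReal_gammaMeasure {a r : ℝ} (ha : 0 < a) (hr : 0 < r) :
    (gammaMeasure a r).withDensity (fun x => ENNReal.ofReal x)
      = ENNReal.ofReal (a / r) • gammaMeasure (a + 1) r := by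
  rw [gammaMeasure, gammaMeasure, ← withDensity_mul _ (measurable_gammaPDF a r)
    ENNReal.measurable_ofReal, ← withDensity_smul _ (measurable_gammaPDF _ r)]
  congr 1
  ext x
  simp only [Pi.mul_apply, Pi.smul_apply, smul_eq_mul]
  rw [mul_comm, ofReal_mul_gammaPDF ha hr]

lemma ae_nonneg_gammaMeasure (a r : ℝ) : ∀ᵐ x ∂gammaMeasure a r, 0 ≤ x := by
  simp_rw [ae_iff, not_le]
  exact (withDensity_apply _ measurableSet_Iio).trans (lintegral_gammaPDF_of_nonpos le_rfl)

lemma integrable_id_gammaMeasure {a r : ℝ} (ha : 0 < a) (hr : 0 < r) :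
    Integrable id (gammaMeasure a r) := by
  have := isProbabilityMeasure_gammaMeasure (ha.trans (lt_add_one a)) hr
  refine ⟨aestronglyMeasurable_id,
    (hasFiniteIntegral_iff_ofReal (ae_nonneg_gammaMeasure a r)).mpr ?_⟩
  rw [← setLIntegral_univ, ← withDensity_apply _ MeasurableSet.univ,
    withDensity_ofReal_gammaMeasure ha hr]
  simp

lemma map_withDensity_comp {α β : Type*} [MeasurableSpace α] [MeasurableSpace β]
    {μ : Measure α} {f : α → β} {g : β → ℝ≥0∞}
    (hf : Measurable f) (hg : Measurable g) :
    (μ.withDensity (g ∘ f)).map f = (μ.map f).withDensity g := by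
  ext s hs
  rw [Measure.map_apply hf hs, withDensity_apply _ (hf hs), withDensity_apply _ hs,
    setLIntegral_map hs hg hf]
  rfl

section GammaRandomVariables

variable {Ω : Type*} [MeasurableSpace Ω] {μ : Measure Ω} {X Y : Ω → ℝ} {a b r : ℝ}

lemma ae_nonneg_of_map_eq_gammaMeasure (hXm : Measurable X) (hX : μ.map X = gammaMeasure a r) :
    0 ≤ᵐ[μ] X :=
  (ae_map_iff hXm.aemeasurable measurableSet_Ici).mp (hX ▸ ae_nonneg_gammaMeasure a r)

lemma integrable_of_map_eq_gammaMeasure (ha : 0 < a) (hr : 0 < r) (hXm : Measurable X)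
    (hX : μ.map X = gammaMeasure a r) : Integrable X μ := by
  refine (integrable_map_measure aestronglyMeasurable_id hXm.aemeasurable).mp ?_
  rw [hX]
  exact integrable_id_gammaMeasure ha hr

variable [IsFiniteMeasure μ]

lemma map_withDensity_ofReal_add_of_gamma (ha : 0 < a) (hb : 0 < b) (hr : 0 < r)
    (hXm : Measurable X) (hYm : Measurable Y) (hindep : IndepFun X Y μ)
    (hX : μ.map X = gammaMeasure a r) (hY : μ.map Y = gammaMeasure b r) :
    (μ.withDensity fun ω => ENNReal.ofReal (X ω)).map (fun ω => X ω + Y ω)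
      = ENNReal.ofReal (a / r) • gammaMeasure (a + b + 1) r := by
  have hprod : μ.map (fun ω => (X ω, Y ω)) = (gammaMeasure a r).prod (gammaMeasure b r) := by
    rw [← hX, ← hY]
    exact (indepFun_iff_map_prod_eq_prod_map_map hXm.aemeasurable hYm.aemeasurable).mp hindep
  have := isProbabilityMeasure_gammaMeasure hb hr
  calc (μ.withDensity fun ω => ENNReal.ofReal (X ω)).map (fun ω => X ω + Y ω)
      = ((μ.withDensity
            ((fun p : ℝ × ℝ => ENNReal.ofReal p.1) ∘ fun ω => (X ω, Y ω))).map
              (fun ω => (X ω, Y ω))).map (fun p => p.1 + p.2) := by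
        rw [Measure.map_map measurable_add (hXm.prodMk hYm)]
        rfl
    _ = (((gammaMeasure a r).withDensity fun x => ENNReal.ofReal x).prod (gammaMeasure b r)).map
          (fun p => p.1 + p.2) := by
        rw [map_withDensity_comp (hXm.prodMk hYm) measurable_fst.ennreal_ofReal, hprod,
          prod_withDensity_left ENNReal.measurable_ofReal]
    _ = ENNReal.ofReal (a / r) • (gammaMeasure (a + 1) r ∗ gammaMeasure b r) := by
        rw [withDensity_ofReal_gammaMeasure ha hr, Measure.prod_smul_left, Measure.map_smul]
        rfl
    _ = ENNReal.ofReal (a / r) • gammaMeasure (a + b + 1) r := by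
        rw [gammaMeasure_conv_gammaMeasure (by positivity) hb hr, add_right_comm]

lemma setIntegral_preimage_add_of_gamma (ha : 0 < a) (hb : 0 < b) (hr : 0 < r)
    (hXm : Measurable X) (hYm : Measurable Y) (hindep : IndepFun X Y μ)
    (hX : μ.map X = gammaMeasure a r) (hY : μ.map Y = gammaMeasure b r)
    {B : Set ℝ} (hB : MeasurableSet B) :
    ∫ ω in (fun ω => X ω + Y ω) ⁻¹' B, X ω ∂μ
      = a / r * (gammaMeasure (a + b + 1) r).real B := by
  have hS : Measurable fun ω => X ω + Y ω := hXm.add hYm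
  rw [integral_eq_lintegral_of_nonneg_ae
      (ae_restrict_of_ae (ae_nonneg_of_map_eq_gammaMeasure hXm hX))
      hXm.aestronglyMeasurable.restrict,
    ← withDensity_apply _ (hS hB), ← Measure.map_apply hS hB,
    map_withDensity_ofReal_add_of_gamma ha hb hr hXm hYm hindep hX hY, Measure.smul_apply,
    smul_eq_mul, ENNReal.toReal_mul, ENNReal.toReal_ofReal (by positivity), measureReal_def]

end GammaRandomVariables

/-- **Conditional expectation identity for Gamma random variables** (step (a) in the
paper's proof of Lemma 4).  If `X ~ Gamma(a, 1)` and `Y ~ Gamma(b, 1)` are independent,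
then `E[X | σ(X+Y)] = (a/(a+b)) (X+Y)` almost surely. -/
theorem gamma_condExp_of_sum
    {Ω : Type*} [MeasurableSpace Ω] (μ : Measure Ω) [IsProbabilityMeasure μ]
    (a b : ℝ) (ha : 0 < a) (hb : 0 < b)
    (X Y : Ω → ℝ) (hXmeas : Measurable X) (hYmeas : Measurable Y)
    (hindep : IndepFun X Y μ)
    (hX : Measure.map X μ = gammaMeasure a 1)
    (hY : Measure.map Y μ = gammaMeasure b 1) :
    μ[X | MeasurableSpace.comap (fun ω => X ω + Y ω) Real.measurableSpace]
      =ᵐ[μ] fun ω => a / (a + b) * (X ω + Y ω) := by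
  have hS : Measurable fun ω => X ω + Y ω := hXmeas.add hYmeas
  have hXint := integrable_of_map_eq_gammaMeasure ha one_pos hXmeas hX
  have hYint := integrable_of_map_eq_gammaMeasure hb one_pos hYmeas hY
  have hXS {B : Set ℝ} (hB : MeasurableSet B) :=
    setIntegral_preimage_add_of_gamma ha hb one_pos hXmeas hYmeas hindep hX hY hB
  have hYS {B : Set ℝ} (hB : MeasurableSet B) :
      ∫ ω in (fun ω => X ω + Y ω) ⁻¹' B, Y ω ∂μ
        = b / 1 * (gammaMeasure (a + b + 1) 1).real B := by
    simpa only [add_comm (Y _), add_comm b] using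
      setIntegral_preimage_add_of_gamma hb ha one_pos hYmeas hXmeas hindep.symm hY hX hB
  refine (ae_eq_condExp_of_forall_setIntegral_eq hS.comap_le hXint
    (fun _ _ _ => ((hXint.add hYint).const_mul _).integrableOn) ?_
    (((comap_measurable _).const_mul _).aestronglyMeasurable)).symm
  rintro _ ⟨B, hB, rfl⟩ -
  rw [integral_const_mul, integral_add' hXint.integrableOn hYint.integrableOn, hXS hB, hYS hB]
  field_simp
end

section
/- Fix S ≥ 2, H > 0, a vector v ∈ [0,H]^S, and parameters α ∈ (0,∞)^S with n := Σ_{i=1}^S α_i ≥ 2. Let G_1, …, G_S be independent with G_i Gamma-distributed with shape α_i and rate 1, let P_i = G_i/Σ_j G_j (so P is Dirichlet(α)-distributed), and let p̂ = α/n be the mean of P. Then for every δ ∈ (0,1], the probability that |Σ_i (P_i − p̂_i) v_i| ≥ H√(2 log(2/δ)/n) is at most δ. -/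
/-!
Scaling `v` by `H` reduces to test vectors `u ∈ [0,1]^S`, and since `∑ (P i - p̂ i) = 0` almost
surely, the lower tail for `u` is the upper tail for `1 - u`. Let `c = ∑ α i u i / n`. Almost
surely `∑ G > 0`, and then `t ≤ ∑ (P i - p̂ i) u i` is the linear event
`0 ≤ ∑ (u i - c - t) G i`. The Chernoff bound with the Gamma moment generating function
`E exp (θ G i) = (1 - θ) ^ (-α i)` bounds its probability by `exp (-∑ α i log (1 - s w i))`,
`w i = u i - c - t`. As `∑ α w = -n t`, `∑ α w² ≤ n (c (1 - c) + t²)` and `w i ≤ 1 - c - t`, the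
estimate `-log (1 - x) ≤ x + x² / (2 (1 - m))` for `x ≤ m` turns this, at Bernstein's choice
`s = t / ((1 - c) (c + t))`, into `exp (-n t² / (2 (1 - c) (c + t))) ≤ exp (-n t² / 2)`.
No quantity depending on `S` appears.
-/

open MeasureTheory ProbabilityTheory Real Set

lemma exp_mul_mul_gammaPDFReal {a r θ : ℝ} (hr : 0 < r) (hθ : θ < r) (x : ℝ) :
    exp (θ * x) * gammaPDFReal a r x = (r / (r - θ)) ^ a * gammaPDFReal a (r - θ) x := by
  have hrθ : 0 < r - θ := sub_pos.2 hθ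
  unfold gammaPDFReal
  split_ifs
  · rw [div_rpow hr.le hrθ.le, show -((r - θ) * x) = -(r * x) + θ * x by ring, exp_add]
    field_simp
  · simp

lemma lintegral_exp_mul_gammaMeasure {a r θ : ℝ} (ha : 0 < a) (hr : 0 < r) (hθ : θ < r) :
    ∫⁻ x, ENNReal.ofReal (exp (θ * x)) ∂gammaMeasure a r = ENNReal.ofReal ((r / (r - θ)) ^ a) := by
  have hrθ : 0 < r - θ := sub_pos.2 hθ
  have htilt : ∀ x, gammaPDF a r x * ENNReal.ofReal (exp (θ * x))
      = ENNReal.ofReal ((r / (r - θ)) ^ a) * gammaPDF a (r - θ) x := fun x => by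
    rw [gammaPDF, gammaPDF, mul_comm, ← ENNReal.ofReal_mul (exp_pos _).le,
      exp_mul_mul_gammaPDFReal hr hθ, ENNReal.ofReal_mul (by positivity)]
  rw [gammaMeasure, lintegral_withDensity_eq_lintegral_mul _ (by unfold gammaPDF; fun_prop)
    (by fun_prop)]
  simp only [Pi.mul_apply, htilt]
  rw [lintegral_const_mul _ (by unfold gammaPDF; fun_prop), lintegral_gammaPDF_eq_one ha hrθ,
    mul_one]

lemma integrable_exp_mul_gammaMeasure {a r θ : ℝ} (ha : 0 < a) (hr : 0 < r) (hθ : θ < r) :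
    Integrable (fun x => exp (θ * x)) (gammaMeasure a r) := by
  refine ⟨by fun_prop, (hasFiniteIntegral_iff_ofReal (ae_of_all _ fun _ => (exp_pos _).le)).2 ?_⟩
  rw [lintegral_exp_mul_gammaMeasure ha hr hθ]
  exact ENNReal.ofReal_lt_top

lemma mgf_id_gammaMeasure {a r θ : ℝ} (ha : 0 < a) (hr : 0 < r) (hθ : θ < r) :
    mgf id (gammaMeasure a r) θ = (r / (r - θ)) ^ a := by
  have hrθ : 0 < r - θ := sub_pos.2 hθ
  rw [mgf, integral_eq_lintegral_of_nonneg_ae (ae_of_all _ fun _ => (exp_pos _).le) (by fun_prop)]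
  simp only [id, lintegral_exp_mul_gammaMeasure ha hr hθ]
  exact ENNReal.toReal_ofReal (by positivity)

lemma ae_pos_gammaMeasure (a r : ℝ) : ∀ᵐ x ∂gammaMeasure a r, 0 < x := by
  have hac : gammaMeasure a r ≪ volume := withDensity_absolutelyContinuous _ _
  rw [ae_iff]
  simp only [not_lt]
  change gammaMeasure a r (Iic 0) = 0
  rw [← measure_congr (hac.ae_eq Iio_ae_eq_Iic), gammaMeasure,
    withDensity_apply _ measurableSet_Iio, lintegral_gammaPDF_of_nonpos le_rfl]

lemma neg_log_one_sub_le {x m : ℝ} (hm0 : 0 ≤ m) (hm1 : m < 1) (hxm : x ≤ m) :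
    -log (1 - x) ≤ x + x ^ 2 / (2 * (1 - m)) := by
  set f : ℝ → ℝ := fun y => y + y ^ 2 / (2 * (1 - m)) + log (1 - y)
  set f' : ℝ → ℝ := fun y => y * (m - y) / ((1 - m) * (1 - y))
  have hf : ∀ y ∈ Iic m, HasDerivAt f (f' y) y := fun y hy => by
    have h1y : 1 - y ≠ 0 := by linarith [mem_Iic.1 hy]
    have h1m : 1 - m ≠ 0 := by linarith
    refine (((hasDerivAt_id' y).add ((hasDerivAt_pow 2 y).div_const (2 * (1 - m)))).add
      (((hasDerivAt_id' y).const_sub 1).log h1y)).congr_deriv ?_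
    simp only [f']
    field_simp
    ring
  have hcont : ContinuousOn f (Iic m) := fun y hy => (hf y hy).continuousAt.continuousWithinAt
  have hf0 : f 0 = 0 := by simp [f]
  -- `f'` has the sign of `y` on `(-∞, m]`, so `f` is minimal at `0`, where it vanishes.
  suffices 0 ≤ f x by simp only [f] at this; linarith
  rcases le_total x 0 with hx | hx
  · refine hf0 ▸ antitoneOn_of_hasDerivWithinAt_nonpos (convex_Iic 0)
      (hcont.mono (Iic_subset_Iic.2 hm0))
      (fun y hy => (hf y (interior_subset.trans (Iic_subset_Iic.2 hm0) hy)).hasDerivWithinAt)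
      (fun y hy => ?_) hx (mem_Iic.2 le_rfl) hx
    rw [interior_Iic, mem_Iio] at hy
    exact div_nonpos_of_nonpos_of_nonneg (mul_nonpos_of_nonpos_of_nonneg hy.le (by linarith))
      (mul_nonneg (by linarith) (by linarith))
  · refine hf0 ▸ monotoneOn_of_hasDerivWithinAt_nonneg (convex_Icc 0 m)
      (hcont.mono Icc_subset_Iic_self)
      (fun y hy => (hf y (interior_subset.trans Icc_subset_Iic_self hy)).hasDerivWithinAt)
      (fun y hy => ?_) (left_mem_Icc.2 hm0) ⟨hx, hxm⟩ hx
    rw [interior_Icc, mem_Ioo] at hy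
    exact div_nonneg (mul_nonneg hy.1.le (by linarith)) (mul_nonneg (by linarith) (by linarith))

section Finite

variable {ι : Type*} [Fintype ι]

lemma exists_neg_sum_mul_log_one_sub_le {α w : ι → ℝ} {b t V : ℝ}
    (hα : ∀ i, 0 ≤ α i) (hwb : ∀ i, w i ≤ b) (hb : 0 ≤ b) (ht : 0 < t) (hV : 0 < V)
    (hmean : ∑ i, α i * w i = -(t * ∑ i, α i)) (hvar : ∑ i, α i * w i ^ 2 ≤ V * ∑ i, α i) :
    ∃ s, 0 ≤ s ∧ (∀ i, s * w i < 1) ∧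
      -∑ i, α i * log (1 - s * w i) ≤ -((∑ i, α i) * t ^ 2 / (2 * (V + t * b))) := by
  set n := ∑ i, α i
  set D := V + t * b
  have hD : 0 < D := by positivity
  -- Bernstein's choice of the Chernoff parameter
  set s := t / D
  have hs : 0 ≤ s := by positivity
  have hsb : s * b < 1 := by
    rw [div_mul_eq_mul_div, div_lt_one hD]
    linarith
  have hsw : ∀ i, s * w i ≤ s * b := fun i => mul_le_mul_of_nonneg_left (hwb i) hs
  have hsb' : 1 - s * b = V / D := by
    simp only [s, D]
    field_simp
    ring
  refine ⟨s, hs, fun i => (hsw i).trans_lt hsb, ?_⟩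
  calc -∑ i, α i * log (1 - s * w i) = ∑ i, α i * -log (1 - s * w i) := by
        simp only [mul_neg, Finset.sum_neg_distrib]
    _ ≤ ∑ i, α i * (s * w i + (s * w i) ^ 2 / (2 * (1 - s * b))) :=
        Finset.sum_le_sum fun i _ =>
          mul_le_mul_of_nonneg_left (neg_log_one_sub_le (by positivity) hsb (hsw i)) (hα i)
    _ = s * ∑ i, α i * w i + s ^ 2 / (2 * (1 - s * b)) * ∑ i, α i * w i ^ 2 := by
        rw [Finset.mul_sum, Finset.mul_sum, ← Finset.sum_add_distrib]
        exact Finset.sum_congr rfl fun i _ => by ring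
    _ ≤ s * -(t * n) + s ^ 2 / (2 * (1 - s * b)) * (V * n) := by
        rw [hmean]
        gcongr
    _ = -(n * t ^ 2 / (2 * D)) := by
        rw [hsb']
        simp only [s]
        field_simp
        ring

lemma exists_neg_sum_mul_log_one_sub_le_of_mem_Icc {α u : ι → ℝ}
    (hα : ∀ i, 0 ≤ α i) (hn : 0 < ∑ i, α i) (hu : ∀ i, u i ∈ Icc (0 : ℝ) 1) {t : ℝ} (ht : 0 < t)
    (hct : (∑ i, α i * u i) / ∑ i, α i + t ≤ 1) :
    ∃ s, 0 ≤ s ∧ (∀ i, s * (u i - (∑ j, α j * u j) / ∑ j, α j - t) < 1) ∧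
      -∑ i, α i * log (1 - s * (u i - (∑ j, α j * u j) / ∑ j, α j - t))
        ≤ -((∑ i, α i) * t ^ 2 / 2) := by
  set n := ∑ i, α i
  set c := (∑ i, α i * u i) / n
  have hsum : ∑ i, α i * u i = c * n := by simp only [c]; field_simp
  have hc0 : 0 ≤ c := div_nonneg (Finset.sum_nonneg fun i _ => mul_nonneg (hα i) (hu i).1) hn.le
  have hmean : ∑ i, α i * (u i - c - t) = -(t * n) := by
    simp only [mul_sub, Finset.sum_sub_distrib, ← Finset.sum_mul, hsum]
    ring
  -- `u i ^ 2 ≤ u i` bounds the second moment by `c (1 - c)` plus the squared shift `t ^ 2`.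
  have hvar : ∑ i, α i * (u i - c - t) ^ 2 ≤ (c * (1 - c) + t ^ 2) * n := by
    calc ∑ i, α i * (u i - c - t) ^ 2
        ≤ ∑ i, ((1 - 2 * c - 2 * t) * (α i * u i) + (c ^ 2 + 2 * c * t + t ^ 2) * α i) :=
          Finset.sum_le_sum fun i _ => by
            nlinarith [mul_nonneg (hα i) (mul_nonneg (hu i).1 (sub_nonneg.2 (hu i).2))]
      _ = (c * (1 - c) + t ^ 2) * n := by
          rw [Finset.sum_add_distrib, ← Finset.mul_sum, ← Finset.mul_sum, hsum]
          ring
  obtain ⟨s, hs, hsw, hlog⟩ := exists_neg_sum_mul_log_one_sub_le hα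
    (fun i => by linarith [(hu i).2] : ∀ i, u i - c - t ≤ 1 - c - t) (by linarith) ht
    (by nlinarith) hmean hvar
  refine ⟨s, hs, hsw, hlog.trans (neg_le_neg ?_)⟩
  have hD : c * (1 - c) + t ^ 2 + t * (1 - c - t) = (1 - c) * (c + t) := by ring
  rw [hD]
  gcongr <;> nlinarith [mul_nonneg hc0 (hc0.trans (le_add_of_nonneg_right ht.le))]

lemma le_sum_div_sub_div_mul_iff {x y u : ι → ℝ} (hx : 0 < ∑ i, x i)
    {t : ℝ} :
    t ≤ ∑ i, (x i / ∑ j, x j - y i / ∑ j, y j) * u i ↔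
      0 ≤ ∑ i, (u i - (∑ j, y j * u j) / ∑ j, y j - t) * x i := by
  have hlhs : ∑ i, (x i / ∑ j, x j - y i / ∑ j, y j) * u i
      = (∑ i, u i * x i) / ∑ j, x j - (∑ j, y j * u j) / ∑ j, y j := by
    simp only [sub_mul, Finset.sum_sub_distrib, Finset.sum_div]
    congr 1 <;> exact Finset.sum_congr rfl fun i _ => by ring
  have hrhs : ∑ i, (u i - (∑ j, y j * u j) / ∑ j, y j - t) * x i
      = ∑ i, u i * x i - ((∑ j, y j * u j) / ∑ j, y j + t) * ∑ j, x j := by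
    simp only [sub_mul, Finset.sum_sub_distrib, ← Finset.mul_sum]
    ring
  rw [hlhs, hrhs, sub_nonneg, ← le_div_iff₀ hx]
  constructor <;> intro h <;> linarith

lemma sum_div_sub_div_mul_one_sub {x y : ι → ℝ} (hx : ∑ i, x i ≠ 0)
    (hy : ∑ i, y i ≠ 0) (u : ι → ℝ) :
    ∑ i, (x i / ∑ j, x j - y i / ∑ j, y j) * (1 - u i)
      = -∑ i, (x i / ∑ j, x j - y i / ∑ j, y j) * u i := by
  simp only [mul_one_sub, Finset.sum_sub_distrib, ← Finset.sum_div, div_self hx, div_self hy]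
  ring

variable {Ω : Type*} [MeasurableSpace Ω] {μ : Measure Ω} {α : ι → ℝ} {G : ι → Ω → ℝ}

lemma ae_forall_pos_of_map_eq_gammaMeasure (hGmeas : ∀ i, Measurable (G i))
    (hGlaw : ∀ i, μ.map (G i) = gammaMeasure (α i) 1) : ∀ᵐ ω ∂μ, ∀ i, 0 < G i ω :=
  ae_all_iff.2 fun i =>
    ae_of_ae_map (hGmeas i).aemeasurable ((hGlaw i).symm ▸ ae_pos_gammaMeasure (α i) 1)

lemma measure_sum_mul_nonneg_le [IsProbabilityMeasure μ] (hα : ∀ i, 0 < α i)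
    (hGmeas : ∀ i, Measurable (G i)) (hGindep : iIndepFun G μ)
    (hGlaw : ∀ i, μ.map (G i) = gammaMeasure (α i) 1) {w : ι → ℝ} {s : ℝ} (hs : 0 ≤ s)
    (hsw : ∀ i, s * w i < 1) :
    μ {ω | 0 ≤ ∑ i, w i * G i ω} ≤ ENNReal.ofReal (exp (-∑ i, α i * log (1 - s * w i))) := by
  set X : ι → Ω → ℝ := fun i ω => w i * G i ω
  have hXmeas : ∀ i, Measurable (X i) := fun i => (hGmeas i).const_mul (w i)
  have hXindep : iIndepFun X μ :=
    hGindep.comp (fun i x => w i * x) (fun i => measurable_const_mul _)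
  have hXint : ∀ i, Integrable (fun ω => exp (s * X i ω)) μ := fun i => by
    have h := integrable_exp_mul_gammaMeasure (hα i) one_pos (θ := s * w i) (by simpa using hsw i)
    rw [← hGlaw i] at h
    simpa [X, mul_assoc, Function.comp_def] using h.comp_measurable (hGmeas i)
  have hXmgf : ∀ i, mgf (X i) μ s = exp (-(α i * log (1 - s * w i))) := fun i => by
    rw [mgf_const_mul, mul_comm (w i), ← mgf_id_map (hGmeas i).aemeasurable, hGlaw i,
      mgf_id_gammaMeasure (hα i) one_pos (hsw i),
      rpow_def_of_pos (one_div_pos.2 (sub_pos.2 (hsw i))), one_div, log_inv, neg_mul, mul_comm]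
  have hchernoff := measure_ge_le_exp_mul_mgf 0 hs
    (hXindep.integrable_exp_mul_sum hXmeas (s := Finset.univ) fun i _ => hXint i)
  rw [hXindep.mgf_sum hXmeas] at hchernoff
  simp only [hXmgf, mul_zero, exp_zero, one_mul, ← exp_sum] at hchernoff
  rw [← ofReal_measureReal]
  refine ENNReal.ofReal_le_ofReal ?_
  simpa [X, Finset.sum_apply] using hchernoff

lemma measure_le_sum_div_sub_mul_le [Nonempty ι] [IsProbabilityMeasure μ] (hα : ∀ i, 0 < α i)
    (hGmeas : ∀ i, Measurable (G i)) (hGindep : iIndepFun G μ)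
    (hGlaw : ∀ i, μ.map (G i) = gammaMeasure (α i) 1) {u : ι → ℝ}
    (hu : ∀ i, u i ∈ Icc (0 : ℝ) 1) {t : ℝ} (ht : 0 < t) :
    μ {ω | t ≤ ∑ i, (G i ω / ∑ j, G j ω - α i / ∑ j, α j) * u i}
      ≤ ENNReal.ofReal (exp (-((∑ i, α i) * t ^ 2 / 2))) := by
  have hn : 0 < ∑ i, α i := Finset.sum_pos (fun i _ => hα i) Finset.univ_nonempty
  set c := (∑ i, α i * u i) / ∑ i, α i
  have hGpos := ae_forall_pos_of_map_eq_gammaMeasure hGmeas hGlaw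
  have hsub : {ω | t ≤ ∑ i, (G i ω / ∑ j, G j ω - α i / ∑ j, α j) * u i}
      ≤ᵐ[μ] {ω | 0 ≤ ∑ i, (u i - c - t) * G i ω} := by
    filter_upwards [hGpos] with ω hω
    exact (le_sum_div_sub_div_mul_iff (Finset.sum_pos (fun i _ => hω i) Finset.univ_nonempty)).1
  refine (measure_mono_ae hsub).trans ?_
  by_cases hct : c + t ≤ 1
  · obtain ⟨s, hs, hsw, hlog⟩ :=
      exists_neg_sum_mul_log_one_sub_le_of_mem_Icc (fun i => (hα i).le) hn hu ht hct
    exact (measure_sum_mul_nonneg_le hα hGmeas hGindep hGlaw hs hsw).trans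
      (ENNReal.ofReal_le_ofReal (exp_le_exp.2 hlog))
  · have hnull : μ {ω | 0 ≤ ∑ i, (u i - c - t) * G i ω} = 0 := by
      refine measure_eq_zero_iff_ae_notMem.2 ?_
      filter_upwards [hGpos] with ω hω
      exact not_le.2 (Finset.sum_neg (fun i _ => mul_neg_of_neg_of_pos
        (by linarith [(hu i).2]) (hω i)) Finset.univ_nonempty)
    simp [hnull]

lemma measure_le_abs_sum_div_sub_mul_le [Nonempty ι] [IsProbabilityMeasure μ]
    (hα : ∀ i, 0 < α i) (hGmeas : ∀ i, Measurable (G i)) (hGindep : iIndepFun G μ)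
    (hGlaw : ∀ i, μ.map (G i) = gammaMeasure (α i) 1) {H : ℝ} (hH : 0 < H) {v : ι → ℝ}
    (hv : ∀ i, v i ∈ Icc (0 : ℝ) H) {t : ℝ} (ht : 0 < t) :
    μ {ω | H * t ≤ |∑ i, (G i ω / ∑ j, G j ω - α i / ∑ j, α j) * v i|}
      ≤ 2 * ENNReal.ofReal (exp (-((∑ i, α i) * t ^ 2 / 2))) := by
  have hn : 0 < ∑ i, α i := Finset.sum_pos (fun i _ => hα i) Finset.univ_nonempty
  set u : ι → ℝ := fun i => v i / H
  have hu : ∀ i, u i ∈ Icc (0 : ℝ) 1 := fun i =>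
    ⟨div_nonneg (hv i).1 hH.le, (div_le_one hH).2 (hv i).2⟩
  have hu' : ∀ i, 1 - u i ∈ Icc (0 : ℝ) 1 := fun i =>
    ⟨by linarith [(hu i).2], by linarith [(hu i).1]⟩
  set D : (ι → ℝ) → Ω → ℝ := fun u ω => ∑ i, (G i ω / ∑ j, G j ω - α i / ∑ j, α j) * u i
  have hevent : ∀ᵐ ω ∂μ, H * t ≤ |D v ω| → t ≤ D u ω ∨ t ≤ D (fun i => 1 - u i) ω := by
    filter_upwards [ae_forall_pos_of_map_eq_gammaMeasure hGmeas hGlaw] with ω hω hE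
    have hT : 0 < ∑ j, G j ω := Finset.sum_pos (fun i _ => hω i) Finset.univ_nonempty
    have hscale : D v ω = H * D u ω := by
      simp only [D, u, Finset.mul_sum]
      exact Finset.sum_congr rfl fun i _ => by field_simp
    rw [hscale, abs_mul, abs_of_pos hH, mul_le_mul_iff_right₀ hH] at hE
    rcases le_abs.1 hE with h | h
    · exact Or.inl h
    · exact Or.inr (by simpa only [D, sum_div_sub_div_mul_one_sub hT.ne' hn.ne'] using h)
  calc μ {ω | H * t ≤ |D v ω|}
      ≤ μ {ω | t ≤ D u ω} + μ {ω | t ≤ D (fun i => 1 - u i) ω} :=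
        (measure_mono_ae hevent).trans (measure_union_le _ _)
    _ ≤ 2 * ENNReal.ofReal (exp (-((∑ i, α i) * t ^ 2 / 2))) := by
        rw [two_mul]
        exact add_le_add (measure_le_sum_div_sub_mul_le hα hGmeas hGindep hGlaw hu ht)
          (measure_le_sum_div_sub_mul_le hα hGmeas hGindep hGlaw hu' ht)

end Finite

theorem dirichlet_transition_concentration_general
    {Ω : Type*} [MeasurableSpace Ω] (μ : Measure Ω) [IsProbabilityMeasure μ]
    (S : ℕ) (hS : 2 ≤ S) (H : ℝ) (hH : 0 < H)
    (v : Fin S → ℝ) (hv : ∀ i, v i ∈ Set.Icc (0 : ℝ) H)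
    (α : Fin S → ℝ) (hα : ∀ i, 0 < α i)
    (G : Fin S → Ω → ℝ) (hGmeas : ∀ i, Measurable (G i))
    (hGindep : iIndepFun G μ)
    (hGlaw : ∀ i, Measure.map (G i) μ = gammaMeasure (α i) 1)
    (P : Fin S → Ω → ℝ) (hP : ∀ i ω, P i ω = G i ω / ∑ j, G j ω)
    (δ : ℝ) (hδ0 : 0 < δ) (hδ1 : δ ≤ 1) :
    μ {ω | H * Real.sqrt (2 * Real.log (2 / δ) / ∑ i, α i) ≤
        |∑ i, (P i ω - α i / ∑ j, α j) * v i|} ≤ ENNReal.ofReal δ := by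
  have : Nonempty (Fin S) := ⟨⟨0, by omega⟩⟩
  have hn : 0 < ∑ i, α i := Finset.sum_pos (fun i _ => hα i) Finset.univ_nonempty
  have hlog : 0 < log (2 / δ) := log_pos (by rw [lt_div_iff₀ hδ0]; linarith)
  set t := sqrt (2 * log (2 / δ) / ∑ i, α i)
  have htail : exp (-((∑ i, α i) * t ^ 2 / 2)) = δ / 2 := by
    rw [sq_sqrt (by positivity), mul_div_cancel₀ _ hn.ne', mul_div_cancel_left₀ _ two_ne_zero,
      exp_neg, exp_log (by positivity), inv_div]
  simp_rw [hP]
  calc _ ≤ 2 * ENNReal.ofReal (exp (-((∑ i, α i) * t ^ 2 / 2))) :=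
        measure_le_abs_sum_div_sub_mul_le hα hGmeas hGindep hGlaw hH hv (sqrt_pos.2 (by positivity))
    _ = ENNReal.ofReal δ := by
        rw [htail, two_mul, ← ENNReal.ofReal_add (by positivity) (by positivity), add_halves]

/-- **Dimension-free Dirichlet concentration** (the fixed-test-vector core of the
paper's Lemma 3).  For `v ∈ [0,H]^S` and `α ∈ (0,∞)^S` with `n := ∑ α i ≥ 2`, let
`P ~ Dirichlet(α)` (realized as normalized independent Gammas) with mean `p̂ = α/n`.
Then for every `δ ∈ (0,1]`,
`P(|∑ i (P i − p̂ i) v i| ≥ H √(2 log(2/δ)/n)) ≤ δ`. -/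
theorem dirichlet_transition_concentration
    {Ω : Type*} [MeasurableSpace Ω] (μ : Measure Ω) [IsProbabilityMeasure μ]
    (S : ℕ) (hS : 2 ≤ S) (H : ℝ) (hH : 0 < H)
    (v : Fin S → ℝ) (hv : ∀ i, v i ∈ Set.Icc (0 : ℝ) H)
    (α : Fin S → ℝ) (hα : ∀ i, 0 < α i) (hαsum : 2 ≤ ∑ i, α i)
    (G : Fin S → Ω → ℝ) (hGmeas : ∀ i, Measurable (G i))
    (hGindep : iIndepFun G μ)
    (hGlaw : ∀ i, Measure.map (G i) μ = gammaMeasure (α i) 1)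
    (P : Fin S → Ω → ℝ) (hP : ∀ i ω, P i ω = G i ω / ∑ j, G j ω)
    (δ : ℝ) (hδ0 : 0 < δ) (hδ1 : δ ≤ 1) :
    μ {ω | H * Real.sqrt (2 * Real.log (2 / δ) / ∑ i, α i) ≤
        |∑ i, (P i ω - α i / ∑ j, α j) * v i|} ≤ ENNReal.ofReal δ :=
  dirichlet_transition_concentration_general μ S hS H hH v hv α hα G hGmeas hGindep hGlaw P hP δ hδ0
    hδ1
end
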